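/- arXiv:2101.03400 — 3 statements merged into one kernel-verified Lean document; each statement's English description precedes it below -/
import Mathlib

section
/- Let Ω ⊂ ℝ³ be a bounded open set with smooth boundary, let E be a constant real 3×3 matrix satisfying E_min|X|² ≤ XᵀEX for all X ∈ ℝ³ with some E_min > 0, and let α, β, ε > 0. Suppose (p_t, p_c) and (p̂_t, p̂_c) are two pairs of functions that are continuously differentiable on the closure of Ω, twice continuously differentiable in Ω, satisfy in Ω the system −∇·(E∇u_t) + (α²/ε²)(u_t − u_c) = 0, −∇·(E∇u_c) − (β²/ε²)(u_t − u_c) = 0, and agree on the boundary: p_t = p̂_t and p_c = p̂_c on ∂Ω. Then p_t = p̂_t and p_c = p̂_c throughout Ω. -/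
open Matrix

/-- Partial derivative `∂_i u` of a function `u : ℝ³ → ℝ`. -/
noncomputable def pd3 (u : (Fin 3 → ℝ) → ℝ) (i : Fin 3) (x : Fin 3 → ℝ) : ℝ :=
  fderiv ℝ u x (Pi.single i 1)

/-- The operator `∇·(E∇u) = ∑_{i,j} E i j * ∂_i ∂_j u` for a constant matrix `E`. -/
noncomputable def divEgrad (E : Matrix (Fin 3) (Fin 3) ℝ) (u : (Fin 3 → ℝ) → ℝ)
    (x : Fin 3 → ℝ) : ℝ :=
  ∑ i, ∑ j, E i j * pd3 (pd3 u j) i x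

open Filter Set

-- L1': derivative of directional derivative
lemma hasFDerivAt_fderiv_apply {s : Set (Fin 3 → ℝ)} (hs : IsOpen s)
    {u : (Fin 3 → ℝ) → ℝ} (hu : ContDiffOn ℝ 2 u s) {x : Fin 3 → ℝ} (hx : x ∈ s)
    (w : Fin 3 → ℝ) :
    HasFDerivAt (fun y => fderiv ℝ u y w) ((fderiv ℝ (fderiv ℝ u) x).flip w) x := by
  have h1 : ContDiffOn ℝ 1 (fderiv ℝ u) s := hu.fderiv_of_isOpen hs (by norm_num)
  have hd : DifferentiableAt ℝ (fderiv ℝ u) x :=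
    (h1.differentiableOn one_ne_zero x hx).differentiableAt (hs.mem_nhds hx)
  have h := hd.hasFDerivAt.clm_apply (hasFDerivAt_const w x)
  simpa using h

lemma pd3_pd3 {s : Set (Fin 3 → ℝ)} (hs : IsOpen s)
    {u : (Fin 3 → ℝ) → ℝ} (hu : ContDiffOn ℝ 2 u s) {x : Fin 3 → ℝ} (hx : x ∈ s)
    (i j : Fin 3) :
    pd3 (pd3 u j) i x = fderiv ℝ (fderiv ℝ u) x (Pi.single i 1) (Pi.single j 1) := by
  have h := (hasFDerivAt_fderiv_apply hs hu hx (Pi.single j 1)).fderiv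
  show fderiv ℝ (fun y => fderiv ℝ u y (Pi.single j 1)) x (Pi.single i 1) = _
  rw [h]
  rfl

lemma divEgrad_eq {s : Set (Fin 3 → ℝ)} (hs : IsOpen s) (E : Matrix (Fin 3) (Fin 3) ℝ)
    {u : (Fin 3 → ℝ) → ℝ} (hu : ContDiffOn ℝ 2 u s) {x : Fin 3 → ℝ} (hx : x ∈ s) :
    divEgrad E u x = ∑ i, ∑ j, E i j * fderiv ℝ (fderiv ℝ u) x (Pi.single i 1) (Pi.single j 1) := by
  unfold divEgrad
  exact Finset.sum_congr rfl fun i _ => Finset.sum_congr rfl fun j _ => by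
    rw [pd3_pd3 hs hu hx]

-- L4: negative-semidefinite-contraction lemma
lemma sum_E_mul_nonpos (E : Matrix (Fin 3) (Fin 3) ℝ) (Emin : ℝ) (hEmin : 0 < Emin)
    (hE : ∀ X : Fin 3 → ℝ, Emin * ∑ i, X i ^ 2 ≤ X ⬝ᵥ E.mulVec X)
    (H : Matrix (Fin 3) (Fin 3) ℝ) (hsym : ∀ i j, H i j = H j i)
    (hneg : ∀ v : Fin 3 → ℝ, v ⬝ᵥ H.mulVec v ≤ 0) :
    ∑ i, ∑ j, E i j * H i j ≤ 0 := by
  have hps : PosSemidef (-H) := by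
    refine PosSemidef.of_dotProduct_mulVec_nonneg ?_ ?_
    · ext i j
      simp [conjTranspose_apply, hsym i j]
    · intro v
      have := hneg v
      simp only [star_trivial]
      simp only [Matrix.neg_mulVec, dotProduct_neg]
      linarith
  obtain ⟨B, hB⟩ : ∃ B : Matrix (Fin 3) (Fin 3) ℝ, -H = Bᴴ * B := by
    open scoped MatrixOrder in
    exact CStarAlgebra.nonneg_iff_eq_star_mul_self.mp hps.nonneg
  have key : ∀ k : Fin 3, 0 ≤ (fun i => B k i) ⬝ᵥ E.mulVec (fun i => B k i) := by
    intro k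
    refine le_trans ?_ (hE _)
    positivity
  have h0 : 0 ≤ ∑ i, ∑ j, E i j * (-H) i j := by
    have hexp : ∑ i, ∑ j, E i j * (-H) i j
        = ∑ k, (fun i => B k i) ⬝ᵥ E.mulVec (fun i => B k i) := by
      rw [hB]
      simp only [dotProduct, Matrix.mulVec, Matrix.mul_apply, conjTranspose_apply, star_trivial,
        Fin.sum_univ_three]
      ring
    rw [hexp]
    exact Finset.sum_nonneg fun k _ => key k
  have : ∑ i, ∑ j, E i j * (-H) i j = -∑ i, ∑ j, E i j * H i j := by
    simp [Finset.sum_neg_distrib, mul_neg]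
  linarith [h0, this ▸ h0]

lemma secondDeriv_nonpos_of_isLocalMax {g g' : ℝ → ℝ} {c : ℝ}
    (hg : ∀ᶠ t in nhds (0:ℝ), HasDerivAt g (g' t) t)
    (hg' : HasDerivAt g' c 0) (hmax : IsLocalMax g 0) : c ≤ 0 := by
  by_contra hc
  push_neg at hc
  have h0 : g' 0 = 0 := by
    have hd : deriv g 0 = g' 0 := hg.self_of_nhds.deriv
    rw [← hd]
    exact hmax.deriv_eq_zero
  have hslope : Tendsto (slope g' 0) (nhdsWithin 0 {0}ᶜ) (nhds c) :=
    hasDerivAt_iff_tendsto_slope.1 hg'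
  have hpos : ∀ᶠ t in nhdsWithin (0:ℝ) {0}ᶜ, 0 < slope g' 0 t :=
    hslope.eventually (eventually_gt_nhds hc)
  have hall : ∀ᶠ t in nhds (0:ℝ),
      (t ∈ ({0}ᶜ : Set ℝ) → 0 < slope g' 0 t) ∧ HasDerivAt g (g' t) t ∧ g t ≤ g 0 :=
    (eventually_nhdsWithin_iff.1 hpos).and (hg.and hmax)
  obtain ⟨ε, hε, hball⟩ := Metric.eventually_nhds_iff_ball.1 hall
  set t₀ := ε / 2 with ht₀
  have ht₀pos : 0 < t₀ := by positivity
  have hsub : Set.Icc (0:ℝ) t₀ ⊆ Metric.ball 0 ε := by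
    intro t ht
    simp only [Metric.mem_ball, Real.dist_eq, sub_zero]
    rw [abs_of_nonneg ht.1]
    linarith [ht.2]
  have hpos' : ∀ t ∈ Set.Ioo (0:ℝ) t₀, 0 < g' t := by
    intro t ht
    have hmem : t ∈ Metric.ball (0:ℝ) ε := hsub ⟨le_of_lt ht.1, le_of_lt ht.2⟩
    have hs := (hball t hmem).1 (by simpa using ne_of_gt ht.1)
    have : slope g' 0 t = g' t / t := by
      simp [slope, h0]
      ring
    rw [this] at hs
    by_contra hgt
    push_neg at hgt
    have : g' t / t ≤ 0 := div_nonpos_of_nonpos_of_nonneg hgt (le_of_lt ht.1)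
    linarith
  have hmono : StrictMonoOn g (Set.Icc 0 t₀) := by
    apply strictMonoOn_of_deriv_pos (convex_Icc _ _)
    · intro t ht
      exact ((hball t (hsub ht)).2.1).continuousAt.continuousWithinAt
    · intro t ht
      rw [interior_Icc] at ht
      rw [((hball t (hsub ⟨le_of_lt ht.1, le_of_lt ht.2⟩)).2.1).deriv]
      exact hpos' t ht
  have h1 : g 0 < g t₀ :=
    hmono (Set.left_mem_Icc.2 (le_of_lt ht₀pos)) (Set.right_mem_Icc.2 (le_of_lt ht₀pos)) ht₀pos
  have h2 : g t₀ ≤ g 0 := (hball t₀ (hsub (Set.right_mem_Icc.2 (le_of_lt ht₀pos)))).2.2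
  linarith

lemma divEgrad_nonpos_of_isLocalMax {s : Set (Fin 3 → ℝ)} (hs : IsOpen s)
    (E : Matrix (Fin 3) (Fin 3) ℝ) (Emin : ℝ) (hEmin : 0 < Emin)
    (hE : ∀ X : Fin 3 → ℝ, Emin * ∑ i, X i ^ 2 ≤ X ⬝ᵥ E.mulVec X)
    {u : (Fin 3 → ℝ) → ℝ} (hu : ContDiffOn ℝ 2 u s) {x : Fin 3 → ℝ} (hx : x ∈ s)
    (hmax : IsLocalMax u x) : divEgrad E u x ≤ 0 := by
  set D2 := fderiv ℝ (fderiv ℝ u) x with hD2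
  -- quadratic form is nonpositive
  have hquad : ∀ v : Fin 3 → ℝ, D2 v v ≤ 0 := by
    intro v
    set ℓ : ℝ → (Fin 3 → ℝ) := fun t => x + t • v with hℓ
    have hℓd : ∀ t : ℝ, HasDerivAt ℓ v t := by
      intro t
      have := ((hasDerivAt_id t).smul_const v).const_add x
      simpa [hℓ] using this
    have hℓ0 : ℓ 0 = x := by simp [hℓ]
    have hℓc : Continuous ℓ := by
      have : ∀ t, HasDerivAt ℓ v t := hℓd
      fun_prop
    have hev : ∀ᶠ t in nhds (0:ℝ), ℓ t ∈ s := by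
      have : Filter.Tendsto ℓ (nhds 0) (nhds x) := by
        rw [← hℓ0]; exact hℓc.continuousAt
      exact this.eventually_mem (hs.mem_nhds hx)
    set g' : ℝ → ℝ := fun t => fderiv ℝ u (ℓ t) v with hg'def
    have hg : ∀ᶠ t in nhds (0:ℝ), HasDerivAt (fun t => u (ℓ t)) (g' t) t := by
      filter_upwards [hev] with t ht
      have hdu : DifferentiableAt ℝ u (ℓ t) :=
        ((hu.differentiableOn two_ne_zero) (ℓ t) ht).differentiableAt (hs.mem_nhds ht)
      exact hdu.hasFDerivAt.comp_hasDerivAt t (hℓd t)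
    have hg' : HasDerivAt g' (D2 v v) 0 := by
      have h1 : HasFDerivAt (fun y => fderiv ℝ u y v) (D2.flip v) x :=
        hasFDerivAt_fderiv_apply hs hu hx v
      have h1' : HasFDerivAt (fun y => fderiv ℝ u y v) (D2.flip v) (ℓ 0) := by
        rw [hℓ0]; exact h1
      have h2 := h1'.comp_hasDerivAt 0 (hℓd 0)
      simp at h2
      exact h2
    have hgmax : IsLocalMax (fun t => u (ℓ t)) 0 := by
      have : Filter.Tendsto ℓ (nhds 0) (nhds x) := by
        rw [← hℓ0]; exact hℓc.continuousAt
      have := this.eventually hmax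
      filter_upwards [this] with t ht
      simpa [hℓ0] using ht
    exact secondDeriv_nonpos_of_isLocalMax hg hg' hgmax
  -- assemble the matrix
  set H : Matrix (Fin 3) (Fin 3) ℝ := Matrix.of fun i j => D2 (Pi.single i 1) (Pi.single j 1)
    with hH
  have hsym : ∀ i j, H i j = H j i := by
    intro i j
    have := (hu.contDiffAt (hs.mem_nhds hx)).isSymmSndFDerivAt (by simp)
    exact this _ _
  have hneg : ∀ v : Fin 3 → ℝ, v ⬝ᵥ H.mulVec v ≤ 0 := by
    intro v
    have hv : v = ∑ i, v i • (Pi.single i 1 : Fin 3 → ℝ) := by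
      ext j
      simp [Pi.single_apply, Finset.sum_apply]
    have hDvv : v ⬝ᵥ H.mulVec v = D2 v v := by
      conv_rhs => rw [hv]
      simp only [Fin.sum_univ_three, map_add, ContinuousLinearMap.add_apply,
        _root_.map_smul, ContinuousLinearMap.smul_apply, smul_eq_mul]
      simp only [dotProduct, Matrix.mulVec, hH, Matrix.of_apply, Fin.sum_univ_three]
      ring
    rw [hDvv]
    exact hquad v
  have := sum_E_mul_nonpos E Emin hEmin hE H hsym hneg
  rw [divEgrad_eq hs E hu hx]
  exact this

lemma diffAt_of_cd2 {s : Set (Fin 3 → ℝ)} (hs : IsOpen s) {f : (Fin 3 → ℝ) → ℝ}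
    (hf : ContDiffOn ℝ 2 f s) {y : Fin 3 → ℝ} (hy : y ∈ s) : DifferentiableAt ℝ f y :=
  ((hf.differentiableOn two_ne_zero) y hy).differentiableAt (hs.mem_nhds hy)

lemma diffAt_fderiv_of_cd2 {s : Set (Fin 3 → ℝ)} (hs : IsOpen s) {f : (Fin 3 → ℝ) → ℝ}
    (hf : ContDiffOn ℝ 2 f s) {y : Fin 3 → ℝ} (hy : y ∈ s) :
    DifferentiableAt ℝ (fderiv ℝ f) y := by
  have h1 : ContDiffOn ℝ 1 (fderiv ℝ f) s := hf.fderiv_of_isOpen hs (by norm_num)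
  exact (h1.differentiableOn one_ne_zero y hy).differentiableAt (hs.mem_nhds hy)

lemma fderiv2_add {s : Set (Fin 3 → ℝ)} (hs : IsOpen s) {f g : (Fin 3 → ℝ) → ℝ}
    (hf : ContDiffOn ℝ 2 f s) (hg : ContDiffOn ℝ 2 g s) {x : Fin 3 → ℝ} (hx : x ∈ s) :
    fderiv ℝ (fderiv ℝ (fun y => f y + g y)) x
      = fderiv ℝ (fderiv ℝ f) x + fderiv ℝ (fderiv ℝ g) x := by
  have h2 : fderiv ℝ (fderiv ℝ (fun z => f z + g z)) x
      = fderiv ℝ (fun y => fderiv ℝ f y + fderiv ℝ g y) x := by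
    apply Filter.EventuallyEq.fderiv_eq
    filter_upwards [hs.mem_nhds hx] with y hy
    exact fderiv_add (diffAt_of_cd2 hs hf hy) (diffAt_of_cd2 hs hg hy)
  rw [h2, fderiv_fun_add (diffAt_fderiv_of_cd2 hs hf hx) (diffAt_fderiv_of_cd2 hs hg hx)]

lemma fderiv2_sub {s : Set (Fin 3 → ℝ)} (hs : IsOpen s) {f g : (Fin 3 → ℝ) → ℝ}
    (hf : ContDiffOn ℝ 2 f s) (hg : ContDiffOn ℝ 2 g s) {x : Fin 3 → ℝ} (hx : x ∈ s) :
    fderiv ℝ (fderiv ℝ (fun y => f y - g y)) x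
      = fderiv ℝ (fderiv ℝ f) x - fderiv ℝ (fderiv ℝ g) x := by
  have h2 : fderiv ℝ (fderiv ℝ (fun z => f z - g z)) x
      = fderiv ℝ (fun y => fderiv ℝ f y - fderiv ℝ g y) x := by
    apply Filter.EventuallyEq.fderiv_eq
    filter_upwards [hs.mem_nhds hx] with y hy
    exact fderiv_sub (diffAt_of_cd2 hs hf hy) (diffAt_of_cd2 hs hg hy)
  rw [h2, fderiv_fun_sub (diffAt_fderiv_of_cd2 hs hf hx) (diffAt_fderiv_of_cd2 hs hg hx)]

lemma fderiv2_const_mul {s : Set (Fin 3 → ℝ)} (hs : IsOpen s) {f : (Fin 3 → ℝ) → ℝ}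
    (hf : ContDiffOn ℝ 2 f s) (a : ℝ) {x : Fin 3 → ℝ} (hx : x ∈ s) :
    fderiv ℝ (fderiv ℝ (fun y => a * f y)) x = a • fderiv ℝ (fderiv ℝ f) x := by
  have h2 : fderiv ℝ (fderiv ℝ (fun z => a * f z)) x
      = fderiv ℝ (fun y => a • fderiv ℝ f y) x := by
    apply Filter.EventuallyEq.fderiv_eq
    filter_upwards [hs.mem_nhds hx] with y hy
    exact fderiv_const_mul (diffAt_of_cd2 hs hf hy) a
  rw [h2, fderiv_fun_const_smul (diffAt_fderiv_of_cd2 hs hf hx) a]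

lemma divEgrad_add {s : Set (Fin 3 → ℝ)} (hs : IsOpen s) (E : Matrix (Fin 3) (Fin 3) ℝ)
    {f g : (Fin 3 → ℝ) → ℝ} (hf : ContDiffOn ℝ 2 f s) (hg : ContDiffOn ℝ 2 g s)
    {x : Fin 3 → ℝ} (hx : x ∈ s) :
    divEgrad E (fun y => f y + g y) x = divEgrad E f x + divEgrad E g x := by
  rw [divEgrad_eq hs E (hf.add hg) hx, divEgrad_eq hs E hf hx, divEgrad_eq hs E hg hx,
    fderiv2_add hs hf hg hx]
  simp only [ContinuousLinearMap.add_apply, Fin.sum_univ_three]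
  ring

lemma divEgrad_sub {s : Set (Fin 3 → ℝ)} (hs : IsOpen s) (E : Matrix (Fin 3) (Fin 3) ℝ)
    {f g : (Fin 3 → ℝ) → ℝ} (hf : ContDiffOn ℝ 2 f s) (hg : ContDiffOn ℝ 2 g s)
    {x : Fin 3 → ℝ} (hx : x ∈ s) :
    divEgrad E (fun y => f y - g y) x = divEgrad E f x - divEgrad E g x := by
  rw [divEgrad_eq hs E (hf.sub hg) hx, divEgrad_eq hs E hf hx, divEgrad_eq hs E hg hx,
    fderiv2_sub hs hf hg hx]
  simp only [ContinuousLinearMap.sub_apply, Fin.sum_univ_three]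
  ring

lemma divEgrad_const_mul {s : Set (Fin 3 → ℝ)} (hs : IsOpen s) (E : Matrix (Fin 3) (Fin 3) ℝ)
    {f : (Fin 3 → ℝ) → ℝ} (hf : ContDiffOn ℝ 2 f s) (a : ℝ)
    {x : Fin 3 → ℝ} (hx : x ∈ s) :
    divEgrad E (fun y => a * f y) x = a * divEgrad E f x := by
  rw [divEgrad_eq hs E (contDiffOn_const.mul hf) hx, divEgrad_eq hs E hf hx,
    fderiv2_const_mul hs hf a hx]
  simp only [ContinuousLinearMap.smul_apply, ContinuousLinearMap.coe_smul', Pi.smul_apply,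
    smul_eq_mul, Fin.sum_univ_three]
  ring

lemma contDiff_expcoord (δ : ℝ) : ContDiff ℝ 2 (fun y : Fin 3 → ℝ => δ * Real.exp (y 0)) :=
  contDiff_const.mul (Real.contDiff_exp.comp (contDiff_apply ℝ ℝ 0))

lemma divEgrad_expcoord (E : Matrix (Fin 3) (Fin 3) ℝ) (δ : ℝ) (x : Fin 3 → ℝ) :
    divEgrad E (fun y : Fin 3 → ℝ => δ * Real.exp (y 0)) x
      = δ * Real.exp (x 0) * E 0 0 := by
  set p0 : (Fin 3 → ℝ) →L[ℝ] ℝ := ContinuousLinearMap.proj 0 with hp0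
  set φ : (Fin 3 → ℝ) → ℝ := fun y => δ * Real.exp (y 0) with hφ
  have hφ' : ∀ y, HasFDerivAt φ ((δ * Real.exp (y 0)) • p0) y := by
    intro y
    have h1 : HasFDerivAt (fun y : Fin 3 → ℝ => y 0) p0 y := p0.hasFDerivAt
    have h2 := (Real.hasDerivAt_exp (y 0)).comp_hasFDerivAt y h1
    have h3 := h2.const_mul δ
    simpa [smul_smul] using h3
  have hfd : fderiv ℝ φ = fun y => (δ * Real.exp (y 0)) • p0 := by
    funext y
    exact (hφ' y).fderiv
  have hsnd : HasFDerivAt (fun y => (δ * Real.exp (y 0)) • p0)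
      (((δ * Real.exp (x 0)) • p0).smulRight p0) x := (hφ' x).smul_const p0
  have hD2 : fderiv ℝ (fderiv ℝ φ) x = ((δ * Real.exp (x 0)) • p0).smulRight p0 := by
    rw [hfd]
    exact hsnd.fderiv
  have hcd : ContDiffOn ℝ 2 φ (Set.univ : Set (Fin 3 → ℝ)) := (contDiff_expcoord δ).contDiffOn
  rw [divEgrad_eq isOpen_univ E hcd (Set.mem_univ x), hD2]
  simp only [ContinuousLinearMap.smulRight_apply, ContinuousLinearMap.smul_apply,
    smul_eq_mul, Fin.sum_univ_three, hp0, ContinuousLinearMap.proj_apply]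
  simp [Pi.single_apply]
  ring

lemma maxp (Ω : Set (Fin 3 → ℝ)) (hΩo : IsOpen Ω) (hΩb : Bornology.IsBounded Ω)
    (E : Matrix (Fin 3) (Fin 3) ℝ) (Emin : ℝ) (hEmin : 0 < Emin)
    (hE : ∀ X : Fin 3 → ℝ, Emin * ∑ i, X i ^ 2 ≤ X ⬝ᵥ E.mulVec X)
    (k : ℝ) (hk : 0 ≤ k)
    {u : (Fin 3 → ℝ) → ℝ} (hu0 : ContinuousOn u (closure Ω)) (hu2 : ContDiffOn ℝ 2 u Ω)
    (heq : ∀ x ∈ Ω, divEgrad E u x = k * u x)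
    (hbd : ∀ x ∈ frontier Ω, u x = 0) :
    ∀ x ∈ closure Ω, u x ≤ 0 := by
  intro x hxcl
  have hcomp : IsCompact (closure Ω) :=
    Metric.isCompact_of_isClosed_isBounded isClosed_closure hΩb.closure
  have hne : (closure Ω).Nonempty := ⟨x, hxcl⟩
  obtain ⟨R, hR⟩ := hΩb.closure.subset_closedBall 0
  set C := Real.exp R with hCdef
  have hC : ∀ y ∈ closure Ω, Real.exp (y 0) ≤ C := by
    intro y hy
    apply Real.exp_le_exp.2
    have h1 : ‖y‖ ≤ R := by
      have := hR hy
      simpa [Metric.mem_closedBall, dist_zero_right] using this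
    calc y 0 ≤ |y 0| := le_abs_self _
    _ ≤ ‖y‖ := by simpa using norm_le_pi_norm y 0
    _ ≤ R := h1
  have hCpos : 0 < C := Real.exp_pos R
  have hE00 : Emin ≤ E 0 0 := by
    have := hE (Pi.single 0 1)
    simpa [dotProduct, Matrix.mulVec, Fin.sum_univ_three, Pi.single_apply] using this
  have key : ∀ δ : ℝ, 0 < δ → u x ≤ δ * C := by
    intro δ hδ
    set v : (Fin 3 → ℝ) → ℝ := fun y => u y + δ * Real.exp (y 0) with hvdef
    have hvc : ContinuousOn v (closure Ω) :=
      hu0.add (Continuous.continuousOn (by fun_prop))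
    obtain ⟨x₀, hx₀cl, hx₀max⟩ := hcomp.exists_isMaxOn hne hvc
    have hux : u x ≤ v x₀ := by
      have h1 : v x ≤ v x₀ := hx₀max hxcl
      have h2 : u x ≤ v x := by
        have := Real.exp_pos (x 0)
        simp only [hvdef]
        nlinarith
      linarith
    have hcl : closure Ω = Ω ∪ frontier Ω := by
      rw [hΩo.frontier_eq]
      rw [Set.union_diff_cancel subset_closure]
    rw [hcl] at hx₀cl
    rcases hx₀cl with hx₀ | hx₀
    · -- interior maximum
      have hloc : IsLocalMax v x₀ :=
        hx₀max.isLocalMax (Filter.mem_of_superset (hΩo.mem_nhds hx₀) subset_closure)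
      have hv2 : ContDiffOn ℝ 2 v Ω := hu2.add ((contDiff_expcoord δ).contDiffOn)
      have hLv : divEgrad E v x₀ = k * u x₀ + δ * Real.exp (x₀ 0) * E 0 0 := by
        rw [divEgrad_add hΩo E hu2 ((contDiff_expcoord δ).contDiffOn) hx₀, heq x₀ hx₀,
          divEgrad_expcoord]
      have hnp : divEgrad E v x₀ ≤ 0 :=
        divEgrad_nonpos_of_isLocalMax hΩo E Emin hEmin hE hv2 hx₀ hloc
      have hexp0 : 0 < Real.exp (x₀ 0) := Real.exp_pos _
      have hE00pos : 0 < E 0 0 := lt_of_lt_of_le hEmin hE00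
      have hprod : 0 < δ * Real.exp (x₀ 0) * E 0 0 := by positivity
      have hku : k * u x₀ < 0 := by linarith
      have hux₀ : u x₀ ≤ 0 := by
        by_contra h'
        push_neg at h'
        nlinarith [mul_nonneg hk h'.le]
      have hCx₀ : Real.exp (x₀ 0) ≤ C := hC x₀ (by rw [hcl]; exact Or.inl hx₀)
      have : v x₀ ≤ δ * C := by
        simp only [hvdef]
        nlinarith
      linarith
    · -- boundary maximum
      have h0 : u x₀ = 0 := hbd x₀ hx₀
      have hCx₀ : Real.exp (x₀ 0) ≤ C := hC x₀ (by rw [hcl]; exact Or.inr hx₀)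
      have : v x₀ ≤ δ * C := by
        simp only [hvdef, h0]
        nlinarith
      linarith
  by_contra h
  push_neg at h
  have h1 := key (u x / (2 * C)) (by positivity)
  have h2 : u x / (2 * C) * C = u x / 2 := by
    field_simp
  linarith

theorem stmt1 (Ω : Set (Fin 3 → ℝ)) (hΩo : IsOpen Ω) (hΩb : Bornology.IsBounded Ω)
    -- smooth boundary: Ω is the sublevel set of a smooth defining function with
    -- nonvanishing gradient on the boundary
    (F : (Fin 3 → ℝ) → ℝ) (hF : ContDiff ℝ (⊤ : ℕ∞) F)
    (hΩF : Ω = {x | F x < 0}) (hfr : frontier Ω = {x | F x = 0})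
    (hgradF : ∀ x ∈ frontier Ω, fderiv ℝ F x ≠ 0)
    (E : Matrix (Fin 3) (Fin 3) ℝ) (Emin : ℝ) (hEmin : 0 < Emin)
    (hE : ∀ X : Fin 3 → ℝ, Emin * ∑ i, X i ^ 2 ≤ X ⬝ᵥ E.mulVec X)
    (α β ε : ℝ) (hα : 0 < α) (hβ : 0 < β) (hε : 0 < ε)
    (pt pc qt qc : (Fin 3 → ℝ) → ℝ)
    (hpt1 : ContDiffOn ℝ 1 pt (closure Ω)) (hpc1 : ContDiffOn ℝ 1 pc (closure Ω))
    (hqt1 : ContDiffOn ℝ 1 qt (closure Ω)) (hqc1 : ContDiffOn ℝ 1 qc (closure Ω))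
    (hpt2 : ContDiffOn ℝ 2 pt Ω) (hpc2 : ContDiffOn ℝ 2 pc Ω)
    (hqt2 : ContDiffOn ℝ 2 qt Ω) (hqc2 : ContDiffOn ℝ 2 qc Ω)
    (hp : ∀ x ∈ Ω,
        -divEgrad E pt x + α ^ 2 / ε ^ 2 * (pt x - pc x) = 0 ∧
        -divEgrad E pc x - β ^ 2 / ε ^ 2 * (pt x - pc x) = 0)
    (hq : ∀ x ∈ Ω,
        -divEgrad E qt x + α ^ 2 / ε ^ 2 * (qt x - qc x) = 0 ∧
        -divEgrad E qc x - β ^ 2 / ε ^ 2 * (qt x - qc x) = 0)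
    (hbd : ∀ x ∈ frontier Ω, pt x = qt x ∧ pc x = qc x) :
    ∀ x ∈ Ω, pt x = qt x ∧ pc x = qc x := by

  set u : (Fin 3 → ℝ) → ℝ := fun y => pt y - qt y with hu
  set v : (Fin 3 → ℝ) → ℝ := fun y => pc y - qc y with hv
  have hu2 : ContDiffOn ℝ 2 u Ω := hpt2.sub hqt2
  have hv2 : ContDiffOn ℝ 2 v Ω := hpc2.sub hqc2
  have hu0 : ContinuousOn u (closure Ω) := (hpt1.sub hqt1).continuousOn
  have hv0 : ContinuousOn v (closure Ω) := (hpc1.sub hqc1).continuousOn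
  -- PDE for the differences
  have hLu : ∀ x ∈ Ω, divEgrad E u x = α ^ 2 / ε ^ 2 * (u x - v x) := by
    intro x hx
    rw [hu]
    rw [divEgrad_sub hΩo E hpt2 hqt2 hx]
    have h1 := (hp x hx).1
    have h2 := (hq x hx).1
    simp only [hu, hv]
    linarith [h1, h2]
  have hLv : ∀ x ∈ Ω, divEgrad E v x = -(β ^ 2 / ε ^ 2) * (u x - v x) := by
    intro x hx
    rw [hv]
    rw [divEgrad_sub hΩo E hpc2 hqc2 hx]
    have h1 := (hp x hx).2
    have h2 := (hq x hx).2
    simp only [hu, hv]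
    linarith [h1, h2]
  -- the combination w := β² u + α² v solves div E grad w = 0
  set w : (Fin 3 → ℝ) → ℝ := fun y => β ^ 2 * u y + α ^ 2 * v y with hw
  set wn : (Fin 3 → ℝ) → ℝ := fun y => (-(β ^ 2)) * u y + (-(α ^ 2)) * v y with hwn
  set d : (Fin 3 → ℝ) → ℝ := fun y => u y - v y with hd
  set dn : (Fin 3 → ℝ) → ℝ := fun y => v y - u y with hdn
  have hLw : ∀ x ∈ Ω, divEgrad E w x = 0 * w x := by
    intro x hx
    rw [hw, divEgrad_add hΩo E (contDiffOn_const.mul hu2) (contDiffOn_const.mul hv2) hx,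
      divEgrad_const_mul hΩo E hu2 _ hx, divEgrad_const_mul hΩo E hv2 _ hx,
      hLu x hx, hLv x hx]
    ring
  have hLwn : ∀ x ∈ Ω, divEgrad E wn x = 0 * wn x := by
    intro x hx
    rw [hwn, divEgrad_add hΩo E (contDiffOn_const.mul hu2) (contDiffOn_const.mul hv2) hx,
      divEgrad_const_mul hΩo E hu2 _ hx, divEgrad_const_mul hΩo E hv2 _ hx,
      hLu x hx, hLv x hx]
    ring
  set k : ℝ := α ^ 2 / ε ^ 2 + β ^ 2 / ε ^ 2 with hkdef
  have hk : 0 ≤ k := by positivity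
  have hLd : ∀ x ∈ Ω, divEgrad E d x = k * d x := by
    intro x hx
    rw [hd, divEgrad_sub hΩo E hu2 hv2 hx, hLu x hx, hLv x hx]
    simp only [hkdef]
    ring
  have hLdn : ∀ x ∈ Ω, divEgrad E dn x = k * dn x := by
    intro x hx
    rw [hdn, divEgrad_sub hΩo E hv2 hu2 hx, hLu x hx, hLv x hx]
    simp only [hkdef]
    ring
  -- boundary values of differences vanish
  have hubd : ∀ z ∈ frontier Ω, u z = 0 := fun z hz => by
    simp [hu, (hbd z hz).1]
  have hvbd : ∀ z ∈ frontier Ω, v z = 0 := fun z hz => by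
    simp [hv, (hbd z hz).2]
  -- apply the maximum principle four times
  have hwle := maxp Ω hΩo hΩb E Emin hEmin hE 0 le_rfl
    ((continuousOn_const.mul hu0).add (continuousOn_const.mul hv0))
    ((contDiffOn_const.mul hu2).add (contDiffOn_const.mul hv2)) hLw
    (fun z hz => by simp [hw, hubd z hz, hvbd z hz])
  have hwnle := maxp Ω hΩo hΩb E Emin hEmin hE 0 le_rfl
    ((continuousOn_const.mul hu0).add (continuousOn_const.mul hv0))
    ((contDiffOn_const.mul hu2).add (contDiffOn_const.mul hv2)) hLwn
    (fun z hz => by simp [hwn, hubd z hz, hvbd z hz])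
  have hdle := maxp Ω hΩo hΩb E Emin hEmin hE k hk (hu0.sub hv0) (hu2.sub hv2) hLd
    (fun z hz => by simp [hd, hubd z hz, hvbd z hz])
  have hdnle := maxp Ω hΩo hΩb E Emin hEmin hE k hk (hv0.sub hu0) (hv2.sub hu2) hLdn
    (fun z hz => by simp [hdn, hubd z hz, hvbd z hz])
  -- conclude
  intro x hx
  have hxcl : x ∈ closure Ω := subset_closure hx
  have h1 : β ^ 2 * u x + α ^ 2 * v x ≤ 0 := hwle x hxcl
  have h2 : (-(β ^ 2)) * u x + (-(α ^ 2)) * v x ≤ 0 := hwnle x hxcl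
  have h3 : u x - v x ≤ 0 := hdle x hxcl
  have h4 : v x - u x ≤ 0 := hdnle x hxcl
  have huv : u x = v x := le_antisymm (by linarith) (by linarith)
  have hcomb : β ^ 2 * u x + α ^ 2 * v x = 0 := le_antisymm h1 (by linarith)
  have hsum : (0:ℝ) < β ^ 2 + α ^ 2 := by positivity
  have hz : (β ^ 2 + α ^ 2) * u x = 0 := by
    rw [← huv] at hcomb
    linarith
  have hu0' : u x = 0 := by
    rcases mul_eq_zero.mp hz with h | h
    · exact absurd h hsum.ne'
    · exact h
  have hv0' : v x = 0 := by rw [← huv]; exact hu0'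
  constructor
  · have : pt x - qt x = 0 := hu0'
    linarith
  · have : pc x - qc x = 0 := hv0'
    linarith
end

section
/- Let E be a constant real 3×3 matrix, α, β, ε > 0, and f : ℝ³ → ℝ a square-integrable continuous function. Suppose φ_t, φ_c : ℝ³ → ℝ are twice continuously differentiable with compact support and satisfy on ℝ³: −∇·(E∇φ_t) + (α²/ε²)(φ_t − φ_c) = −(α²/ε²) f and −∇·(E∇φ_c) − (β²/ε²)(φ_t − φ_c) = (β²/ε²) f. If moreover XᵀEX ≥ 0 for all X ∈ ℝ³, then ‖φ_t − φ_c‖_{L²(ℝ³)} ≤ ‖f‖_{L²(ℝ³)}. -/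
/-!
With `ψ = φt - φc` and `k = (α² + β²)/ε²`, subtracting the two equations gives
`-f = ψ - k⁻¹ ∇·(E∇ψ)`. Integrating by parts, `∫ ψ ∇·(E∇ψ) = -∫ ∇ψ ⬝ E∇ψ ≤ 0`, so `-∇·(E∇·)` is
accretive, and in a real inner product space `0 ≤ ⟪x, y⟫` implies `‖x‖ ≤ ‖x + y‖`.
-/

open Matrix MeasureTheory

open RealInnerProductSpace

lemma norm_le_norm_add_of_inner_nonneg {F : Type*} [NormedAddCommGroup F]
    [InnerProductSpace ℝ F] {x y : F} (h : 0 ≤ ⟪x, y⟫) : ‖x‖ ≤ ‖x + y‖ := by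
  rw [← sq_le_sq₀ (norm_nonneg _) (norm_nonneg _), norm_add_sq_real]
  nlinarith [sq_nonneg ‖y‖]

lemma eLpNorm_two_le_eLpNorm_add_of_integral_mul_nonneg {α : Type*} [MeasurableSpace α]
    {μ : Measure α} {u v : α → ℝ} (hu : MemLp u 2 μ) (hv : MemLp v 2 μ)
    (huv : 0 ≤ ∫ x, u x * v x ∂μ) : eLpNorm u 2 μ ≤ eLpNorm (u + v) 2 μ := by
  have hinner : ⟪hu.toLp u, hv.toLp v⟫ = ∫ x, u x * v x ∂μ := by
    rw [L2.inner_def]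
    refine integral_congr_ae ?_
    filter_upwards [hu.coeFn_toLp, hv.coeFn_toLp] with x hux hvx
    simp [hux, hvx, mul_comm]
  have hnorm := norm_le_norm_add_of_inner_nonneg (hinner ▸ huv)
  rw [← MemLp.toLp_add, Lp.norm_toLp, Lp.norm_toLp] at hnorm
  exact (ENNReal.toReal_le_toReal hu.eLpNorm_ne_top (hu.add hv).eLpNorm_ne_top).1 hnorm

lemma hasCompactSupport_finsetSum {X M ι : Type*} [TopologicalSpace X] [AddCommMonoid M]
    {s : Finset ι} {u : ι → X → M} (hu : ∀ i ∈ s, HasCompactSupport (u i)) :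
    HasCompactSupport (fun x => ∑ i ∈ s, u i x) := by
  classical
  induction s using Finset.induction_on with
  | empty =>
    simp only [Finset.sum_empty]
    exact HasCompactSupport.zero
  | insert a s ha ih =>
    simp only [Finset.sum_insert ha]
    exact (hu a (Finset.mem_insert_self a s)).add
      (ih fun i hi => hu i (Finset.mem_insert_of_mem hi))

lemma integral_sum_sum_const_mul {α ι κ : Type*} [MeasurableSpace α] {μ : Measure α}
    [Fintype ι] [Fintype κ] (c : ι → κ → ℝ) {F : ι → κ → α → ℝ}
    (hF : ∀ i j, Integrable (F i j) μ) :
    ∫ x, ∑ i, ∑ j, c i j * F i j x ∂μ = ∑ i, ∑ j, c i j * ∫ x, F i j x ∂μ := by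
  rw [integral_finsetSum _ fun i _ => integrable_finsetSum _ fun j _ => (hF i j).const_mul _]
  refine Finset.sum_congr rfl fun i _ => ?_
  rw [integral_finsetSum _ fun j _ => (hF i j).const_mul _]
  exact Finset.sum_congr rfl fun j _ => integral_const_mul _ _

section PartialDerivatives

variable {u v : (Fin 3 → ℝ) → ℝ}

noncomputable def grad3 (u : (Fin 3 → ℝ) → ℝ) (x : Fin 3 → ℝ) : Fin 3 → ℝ :=
  fun i => pd3 u i x

lemma contDiff_pd3 {m n : WithTop ℕ∞} (hu : ContDiff ℝ n u) (hmn : m + 1 ≤ n) (i : Fin 3) :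
    ContDiff ℝ m (pd3 u i) :=
  (ContinuousLinearMap.apply ℝ ℝ (Pi.single i 1 : Fin 3 → ℝ)).contDiff.comp
    (hu.fderiv_right hmn)

lemma continuous_pd3 {n : WithTop ℕ∞} (hu : ContDiff ℝ n u) (hn : n ≠ 0) (i : Fin 3) :
    Continuous (pd3 u i) :=
  (ContinuousLinearMap.apply ℝ ℝ (Pi.single i 1 : Fin 3 → ℝ)).continuous.comp
    (hu.continuous_fderiv hn)

lemma hasCompactSupport_pd3 (hu : HasCompactSupport u) (i : Fin 3) :
    HasCompactSupport (pd3 u i) :=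
  hu.fderiv_apply (𝕜 := ℝ) (Pi.single i 1)

lemma pd3_sub (hu : Differentiable ℝ u) (hv : Differentiable ℝ v) (i : Fin 3) :
    pd3 (fun x => u x - v x) i = fun x => pd3 u i x - pd3 v i x := by
  funext x
  simp only [pd3, fderiv_fun_sub (hu x) (hv x)]
  rfl

lemma integral_mul_pd3 (hu : ContDiff ℝ 1 u) (hv : ContDiff ℝ 1 v) (huc : HasCompactSupport u)
    (i : Fin 3) : ∫ x, u x * pd3 v i x = -∫ x, pd3 u i x * v x :=
  integral_mul_fderiv_eq_neg_fderiv_mul_of_integrable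
    (((continuous_pd3 hu one_ne_zero i).mul hv.continuous).integrable_of_hasCompactSupport
      (hasCompactSupport_pd3 huc i).mul_right)
    ((hu.continuous.mul (continuous_pd3 hv one_ne_zero i)).integrable_of_hasCompactSupport
      huc.mul_right)
    ((hu.continuous.mul hv.continuous).integrable_of_hasCompactSupport huc.mul_right)
    (fun x _ => hu.differentiable one_ne_zero x) (fun x _ => hv.differentiable one_ne_zero x)

end PartialDerivatives

section Divergence

variable {E : Matrix (Fin 3) (Fin 3) ℝ} {u v : (Fin 3 → ℝ) → ℝ}

lemma divEgrad_sub_s2 (hu : ContDiff ℝ 2 u) (hv : ContDiff ℝ 2 v) (x : Fin 3 → ℝ) :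
    divEgrad E (fun y => u y - v y) x = divEgrad E u x - divEgrad E v x := by
  have h1 : ∀ j, ContDiff ℝ 1 (pd3 u j) := contDiff_pd3 hu (by norm_num)
  have h2 : ∀ j, ContDiff ℝ 1 (pd3 v j) := contDiff_pd3 hv (by norm_num)
  simp only [divEgrad, pd3_sub (hu.differentiable two_ne_zero) (hv.differentiable two_ne_zero),
    fun j => pd3_sub ((h1 j).differentiable one_ne_zero) ((h2 j).differentiable one_ne_zero),
    mul_sub, Finset.sum_sub_distrib]

lemma continuous_divEgrad (hu : ContDiff ℝ 2 u) : Continuous (divEgrad E u) :=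
  continuous_finsetSum _ fun i _ => continuous_finsetSum _ fun j _ =>
    continuous_const.mul (continuous_pd3 (contDiff_pd3 hu (m := 1) (by norm_num) j) one_ne_zero i)

lemma hasCompactSupport_divEgrad (hu : HasCompactSupport u) :
    HasCompactSupport (divEgrad E u) :=
  hasCompactSupport_finsetSum fun i _ => hasCompactSupport_finsetSum fun j _ =>
    (hasCompactSupport_pd3 (hasCompactSupport_pd3 hu j) i).mul_left

lemma integral_mul_divEgrad (hu : ContDiff ℝ 2 u) (huc : HasCompactSupport u) :
    ∫ x, u x * divEgrad E u x = -∫ x, grad3 u x ⬝ᵥ E *ᵥ grad3 u x := by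
  have h1 : ∀ j, ContDiff ℝ 1 (pd3 u j) := contDiff_pd3 hu (by norm_num)
  calc ∫ x, u x * divEgrad E u x
      = ∫ x, ∑ i, ∑ j, E i j * (u x * pd3 (pd3 u j) i x) := by
        simp only [divEgrad, Finset.mul_sum, mul_left_comm]
    _ = ∑ i, ∑ j, E i j * ∫ x, u x * pd3 (pd3 u j) i x :=
        integral_sum_sum_const_mul E fun i j =>
          (hu.continuous.mul (continuous_pd3 (h1 j) one_ne_zero i)).integrable_of_hasCompactSupport
            huc.mul_right
    _ = -∑ i, ∑ j, E i j * ∫ x, pd3 u i x * pd3 u j x := by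
        simp only [integral_mul_pd3 (hu.of_le one_le_two) (h1 _) huc, mul_neg,
          Finset.sum_neg_distrib]
    _ = -∫ x, ∑ i, ∑ j, E i j * (pd3 u i x * pd3 u j x) := by
        rw [integral_sum_sum_const_mul E (F := fun i j x => pd3 u i x * pd3 u j x) fun i j =>
          ((h1 i).continuous.mul (h1 j).continuous).integrable_of_hasCompactSupport
            (hasCompactSupport_pd3 huc i).mul_right]
    _ = -∫ x, grad3 u x ⬝ᵥ E *ᵥ grad3 u x := by
        simp only [grad3, dotProduct, mulVec, Finset.mul_sum, mul_left_comm]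

lemma integral_mul_divEgrad_nonpos (hE : ∀ X : Fin 3 → ℝ, 0 ≤ X ⬝ᵥ E *ᵥ X)
    (hu : ContDiff ℝ 2 u) (huc : HasCompactSupport u) : ∫ x, u x * divEgrad E u x ≤ 0 := by
  rw [integral_mul_divEgrad hu huc, neg_nonpos]
  exact integral_nonneg fun x => hE (grad3 u x)

lemma eLpNorm_le_eLpNorm_sub_smul_divEgrad (hE : ∀ X : Fin 3 → ℝ, 0 ≤ X ⬝ᵥ E *ᵥ X)
    (hu : ContDiff ℝ 2 u) (huc : HasCompactSupport u) {c : ℝ} (hc : 0 ≤ c) :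
    eLpNorm u 2 volume ≤ eLpNorm (u - c • divEgrad E u) 2 volume := by
  have hLu : MemLp (divEgrad E u) 2 volume :=
    (continuous_divEgrad hu).memLp_of_hasCompactSupport (hasCompactSupport_divEgrad huc)
  rw [sub_eq_add_neg, ← neg_smul]
  refine eLpNorm_two_le_eLpNorm_add_of_integral_mul_nonneg
    (hu.continuous.memLp_of_hasCompactSupport huc) (hLu.const_smul _) ?_
  simp only [Pi.smul_apply, smul_eq_mul, mul_left_comm _ (-c), integral_const_mul]
  exact mul_nonneg_of_nonpos_of_nonpos (neg_nonpos.2 hc) (integral_mul_divEgrad_nonpos hE hu huc)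

end Divergence

theorem stmt2_general (E : Matrix (Fin 3) (Fin 3) ℝ)
    (hE : ∀ X : Fin 3 → ℝ, 0 ≤ X ⬝ᵥ E.mulVec X)
    (α β ε : ℝ) (hα : 0 < α) (hε : 0 < ε)
    (f : (Fin 3 → ℝ) → ℝ)
    (φt φc : (Fin 3 → ℝ) → ℝ)
    (hφt : ContDiff ℝ 2 φt) (hφtc : HasCompactSupport φt)
    (hφc : ContDiff ℝ 2 φc) (hφcc : HasCompactSupport φc)
    (heqt : ∀ x, -divEgrad E φt x + α ^ 2 / ε ^ 2 * (φt x - φc x) = -(α ^ 2 / ε ^ 2) * f x)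
    (heqc : ∀ x, -divEgrad E φc x - β ^ 2 / ε ^ 2 * (φt x - φc x) = β ^ 2 / ε ^ 2 * f x) :
    eLpNorm (fun x => φt x - φc x) 2 volume ≤ eLpNorm f 2 volume := by
  set ψ : (Fin 3 → ℝ) → ℝ := fun x => φt x - φc x
  set k := (α ^ 2 + β ^ 2) / ε ^ 2
  have hk : 0 < k := by positivity
  have hkf : ∀ x, k * f x = divEgrad E ψ x - k * ψ x := fun x => by
    rw [divEgrad_sub_s2 hφt hφc x]
    linear_combination heqt x - heqc x
  have hf : f = -(ψ - k⁻¹ • divEgrad E ψ) := by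
    funext x
    simp only [Pi.neg_apply, Pi.sub_apply, Pi.smul_apply, smul_eq_mul]
    field_simp
    linear_combination hkf x
  rw [hf, eLpNorm_neg]
  exact eLpNorm_le_eLpNorm_sub_smul_divEgrad hE (hφt.sub hφc) (hφtc.sub hφcc)
    (inv_nonneg.2 hk.le)

theorem stmt2 (E : Matrix (Fin 3) (Fin 3) ℝ)
    (hE : ∀ X : Fin 3 → ℝ, 0 ≤ X ⬝ᵥ E.mulVec X)
    (α β ε : ℝ) (hα : 0 < α) (hβ : 0 < β) (hε : 0 < ε)
    (f : (Fin 3 → ℝ) → ℝ) (hfc : Continuous f) (hf2 : MemLp f 2 volume)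
    (φt φc : (Fin 3 → ℝ) → ℝ)
    (hφt : ContDiff ℝ 2 φt) (hφtc : HasCompactSupport φt)
    (hφc : ContDiff ℝ 2 φc) (hφcc : HasCompactSupport φc)
    (heqt : ∀ x, -divEgrad E φt x + α ^ 2 / ε ^ 2 * (φt x - φc x) = -(α ^ 2 / ε ^ 2) * f x)
    (heqc : ∀ x, -divEgrad E φc x - β ^ 2 / ε ^ 2 * (φt x - φc x) = β ^ 2 / ε ^ 2 * f x) :
    eLpNorm (fun x => φt x - φc x) 2 volume ≤ eLpNorm f 2 volume :=
  stmt2_general E hE α β ε hα hε f φt φc hφt hφtc hφc hφcc heqt heqc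
end

section
/- Let α, β > 0 with α² + β² > 0, let Ẽ₃₃ > 0, set γ := √((α² + β²)/Ẽ₃₃) and λ := (α² − β²)/Ẽ₃₃, and let a, c ∈ ℝ. Define q₀(ρ) := c e^{−γρ}, q₁(ρ) := (a c/(2 Ẽ₃₃)) ρ e^{−γρ}, p₀ := (λ/γ²) q₀ = ((α²−β²)/(α²+β²)) c e^{−γρ}, and p₁ := (λ/γ²) q₁. Then for all ρ ∈ (0, ∞): (i) −q₁''(ρ) + γ² q₁(ρ) = −(a/Ẽ₃₃) q₀'(ρ); (ii) p₀''(ρ) = λ q₀(ρ); and (iii) p₁''(ρ) = λ q₁(ρ) + (a/Ẽ₃₃) p₀'(ρ). Moreover q₁(0) = p₁(0) = 0, p₀(0) = ((α²−β²)/(α²+β²)) c, and all four functions tend to 0 as ρ → ∞. -/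
/-!
Every profile is a multiple of `e^{-γρ}` or of `ρ e^{-γρ}`. The first solves `u'' = γ² u`; the
second is the resonant solution of `-u'' + γ² u = 2γ e^{-γρ}`, which is exactly the source
`-(a/Ẽ₃₃) q₀' = (a γ c/Ẽ₃₃) e^{-γρ}` of (i). Multiplying by `λ/γ²` turns `γ²` into `λ` in (ii)
and (iii), and both profiles decay because `γ > 0`.
-/

open Filter Topology Real

theorem deriv_deriv_const_mul_field {𝕜 : Type*} [NontriviallyNormedField 𝕜] (u : 𝕜)
    (f : 𝕜 → 𝕜) (x : 𝕜) : deriv (deriv fun x => u * f x) x = u * deriv (deriv f) x := by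
  rw [deriv_const_mul_field', deriv_const_mul_field']

namespace ExpDecay

variable (γ : ℝ)

theorem hasDerivAt_exp_neg_mul (x : ℝ) :
    HasDerivAt (fun x => exp (-(γ * x))) (-γ * exp (-(γ * x))) x := by
  simpa [mul_comm] using ((hasDerivAt_id x).const_mul γ).neg.exp

theorem deriv_exp_neg_mul : deriv (fun x => exp (-(γ * x))) = fun x => -γ * exp (-(γ * x)) :=
  funext fun x => (hasDerivAt_exp_neg_mul γ x).deriv

theorem deriv_deriv_exp_neg_mul :
    deriv (deriv fun x => exp (-(γ * x))) = fun x => γ ^ 2 * exp (-(γ * x)) := by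
  ext x
  rw [deriv_exp_neg_mul, deriv_const_mul_field', deriv_exp_neg_mul]
  ring

theorem deriv_id_mul_exp_neg_mul :
    deriv (fun x => x * exp (-(γ * x))) = fun x => (1 - γ * x) * exp (-(γ * x)) :=
  funext fun x => (((hasDerivAt_id x).mul (hasDerivAt_exp_neg_mul γ x)).congr_deriv (by
    simp only [id]; ring)).deriv

theorem deriv_deriv_id_mul_exp_neg_mul (x : ℝ) :
    deriv (deriv fun x => x * exp (-(γ * x))) x
      = γ ^ 2 * (x * exp (-(γ * x))) - 2 * γ * exp (-(γ * x)) := by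
  have h : HasDerivAt (fun x => 1 - γ * x) (-γ) x := by
    simpa using ((hasDerivAt_id x).const_mul γ).const_sub 1
  rw [deriv_id_mul_exp_neg_mul]
  exact (h.mul (hasDerivAt_exp_neg_mul γ x)).deriv.trans (by ring)

variable {γ}

theorem tendsto_exp_neg_mul_atTop (hγ : 0 < γ) :
    Tendsto (fun x => exp (-(γ * x))) atTop (𝓝 0) :=
  tendsto_exp_neg_atTop_nhds_zero.comp (tendsto_id.const_mul_atTop hγ)

theorem tendsto_id_mul_exp_neg_mul_atTop (hγ : 0 < γ) :
    Tendsto (fun x => x * exp (-(γ * x))) atTop (𝓝 0) := by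
  have h := ((tendsto_pow_mul_exp_neg_atTop_nhds_zero 1).comp
    (tendsto_id.const_mul_atTop hγ)).const_mul γ⁻¹
  rw [mul_zero] at h
  refine h.congr fun x => ?_
  simp only [Function.comp, id, pow_one]
  field_simp

end ExpDecay

open ExpDecay

theorem stmt13_general (α β E33 a c : ℝ)
    (hsum : 0 < α ^ 2 + β ^ 2) (hE : 0 < E33) :
    let γ := Real.sqrt ((α ^ 2 + β ^ 2) / E33)
    let lam := (α ^ 2 - β ^ 2) / E33
    let q0 : ℝ → ℝ := fun ρ => c * Real.exp (-(γ * ρ))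
    let q1 : ℝ → ℝ := fun ρ => a * c / (2 * E33) * ρ * Real.exp (-(γ * ρ))
    let p0 : ℝ → ℝ := fun ρ => lam / γ ^ 2 * q0 ρ
    let p1 : ℝ → ℝ := fun ρ => lam / γ ^ 2 * q1 ρ
    (∀ ρ, p0 ρ = (α ^ 2 - β ^ 2) / (α ^ 2 + β ^ 2) * c * Real.exp (-(γ * ρ))) ∧
    (∀ ρ ∈ Set.Ioi (0:ℝ),
        -(deriv (deriv q1) ρ) + γ ^ 2 * q1 ρ = -(a / E33) * deriv q0 ρ) ∧
    (∀ ρ ∈ Set.Ioi (0:ℝ), deriv (deriv p0) ρ = lam * q0 ρ) ∧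
    (∀ ρ ∈ Set.Ioi (0:ℝ),
        deriv (deriv p1) ρ = lam * q1 ρ + a / E33 * deriv p0 ρ) ∧
    q1 0 = 0 ∧ p1 0 = 0 ∧
    p0 0 = (α ^ 2 - β ^ 2) / (α ^ 2 + β ^ 2) * c ∧
    Filter.Tendsto q0 Filter.atTop (nhds 0) ∧
    Filter.Tendsto q1 Filter.atTop (nhds 0) ∧
    Filter.Tendsto p0 Filter.atTop (nhds 0) ∧
    Filter.Tendsto p1 Filter.atTop (nhds 0) := by
  intro γ lam q0 q1 p0 p1
  have hγ2 : γ ^ 2 = (α ^ 2 + β ^ 2) / E33 := sq_sqrt (div_pos hsum hE).le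
  have hγ : 0 < γ := sqrt_pos.mpr (div_pos hsum hE)
  have hq1 : q1 = fun x => a * c / (2 * E33) * (x * exp (-(γ * x))) :=
    funext fun x => mul_assoc _ _ _
  have hq0' : deriv q0 = fun x => c * (-γ * exp (-(γ * x))) := by
    rw [deriv_const_mul_field', deriv_exp_neg_mul]
  have hq0'' : ∀ x, deriv (deriv q0) x = c * (γ ^ 2 * exp (-(γ * x))) := by
    intro x; rw [deriv_deriv_const_mul_field, deriv_deriv_exp_neg_mul]
  have hq1'' : ∀ x, deriv (deriv q1) x
      = a * c / (2 * E33) * (γ ^ 2 * (x * exp (-(γ * x))) - 2 * γ * exp (-(γ * x))) := by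
    intro x; rw [hq1, deriv_deriv_const_mul_field, deriv_deriv_id_mul_exp_neg_mul]
  have hp0' : deriv p0 = fun x => lam / γ ^ 2 * deriv q0 x := deriv_const_mul_field' _
  have hp0 : ∀ ρ, p0 ρ = (α ^ 2 - β ^ 2) / (α ^ 2 + β ^ 2) * c * exp (-(γ * ρ)) := by
    intro ρ
    simp only [p0, q0, lam, hγ2]
    field_simp
  have hq0_lim : Tendsto q0 atTop (𝓝 0) := by
    simpa using (tendsto_exp_neg_mul_atTop hγ).const_mul c
  have hq1_lim : Tendsto q1 atTop (𝓝 0) := by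
    simpa [hq1] using (tendsto_id_mul_exp_neg_mul_atTop hγ).const_mul (a * c / (2 * E33))
  refine ⟨hp0, fun ρ _ => ?_, fun ρ _ => ?_, fun ρ _ => ?_, by simp [q1], by simp [p1, q1],
    by simp [hp0], hq0_lim, hq1_lim, by simpa using hq0_lim.const_mul (lam / γ ^ 2),
    by simpa using hq1_lim.const_mul (lam / γ ^ 2)⟩
  · rw [hq1'', hq0', hq1]
    field_simp
    ring
  · rw [deriv_deriv_const_mul_field, hq0'']
    field_simp
    ring
  · rw [deriv_deriv_const_mul_field, hq1'', hp0', hq0', hq1]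
    field_simp
    ring

theorem stmt13 (α β E33 a c : ℝ) (hα : 0 < α) (hβ : 0 < β)
    (hsum : 0 < α ^ 2 + β ^ 2) (hE : 0 < E33) :
    let γ := Real.sqrt ((α ^ 2 + β ^ 2) / E33)
    let lam := (α ^ 2 - β ^ 2) / E33
    let q0 : ℝ → ℝ := fun ρ => c * Real.exp (-(γ * ρ))
    let q1 : ℝ → ℝ := fun ρ => a * c / (2 * E33) * ρ * Real.exp (-(γ * ρ))
    let p0 : ℝ → ℝ := fun ρ => lam / γ ^ 2 * q0 ρ
    let p1 : ℝ → ℝ := fun ρ => lam / γ ^ 2 * q1 ρ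
    (∀ ρ, p0 ρ = (α ^ 2 - β ^ 2) / (α ^ 2 + β ^ 2) * c * Real.exp (-(γ * ρ))) ∧
    (∀ ρ ∈ Set.Ioi (0:ℝ),
        -(deriv (deriv q1) ρ) + γ ^ 2 * q1 ρ = -(a / E33) * deriv q0 ρ) ∧
    (∀ ρ ∈ Set.Ioi (0:ℝ), deriv (deriv p0) ρ = lam * q0 ρ) ∧
    (∀ ρ ∈ Set.Ioi (0:ℝ),
        deriv (deriv p1) ρ = lam * q1 ρ + a / E33 * deriv p0 ρ) ∧
    q1 0 = 0 ∧ p1 0 = 0 ∧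
    p0 0 = (α ^ 2 - β ^ 2) / (α ^ 2 + β ^ 2) * c ∧
    Filter.Tendsto q0 Filter.atTop (nhds 0) ∧
    Filter.Tendsto q1 Filter.atTop (nhds 0) ∧
    Filter.Tendsto p0 Filter.atTop (nhds 0) ∧
    Filter.Tendsto p1 Filter.atTop (nhds 0) :=
  stmt13_general α β E33 a c hsum hE
end
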